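/- arXiv:1410.1683 — 2 statements merged into one kernel-verified Lean document; each statement's English description precedes it below -/
import Mathlib

section
/- Let P and Q be monic polynomials over a field k with greatest common divisor G, and write P = G·P̃, Q = G·Q̃. Let g = deg G and let H = gcd(G, Q̃^g) with G = H·K. Then every irreducible factor of H divides Q̃, K is coprime to Q̃, and lcm(P,Q) equals the product of the two coprime polynomials H·Q̃ and K·P̃. -/
open Polynomial

theorem lcm_decomposition {k : Type*} [Field k] [DecidableEq k] (P Q : Polynomial k)
    (hP : P.Monic) (hQ : Q.Monic)
    (Pt Qt : Polynomial k)
    (hPt : P = gcd P Q * Pt) (hQt : Q = gcd P Q * Qt)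
    (K : Polynomial k)
    (hK : gcd P Q = gcd (gcd P Q) (Qt ^ (gcd P Q).natDegree) * K) :
    (∀ p : Polynomial k, Irreducible p →
        p ∣ gcd (gcd P Q) (Qt ^ (gcd P Q).natDegree) → p ∣ Qt) ∧
    IsCoprime K Qt ∧
    IsCoprime (gcd (gcd P Q) (Qt ^ (gcd P Q).natDegree) * Qt) (K * Pt) ∧
    lcm P Q = (gcd (gcd P Q) (Qt ^ (gcd P Q).natDegree) * Qt) * (K * Pt) := by
  set G := gcd P Q with hGdef
  set g := G.natDegree with hgdef
  set H := gcd G (Qt ^ g) with hHdef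
  have hP0 : P ≠ 0 := hP.ne_zero
  have hQ0 : Q ≠ 0 := hQ.ne_zero
  have hG0 : G ≠ 0 := fun h => hP0 ((gcd_eq_zero_iff P Q).mp h).1
  have hH0 : H ≠ 0 := fun h => hG0 ((gcd_eq_zero_iff G (Qt ^ g)).mp h).1
  have hQt0 : Qt ≠ 0 := right_ne_zero_of_mul (hQt ▸ hQ0)
  have hPt0 : Pt ≠ 0 := right_ne_zero_of_mul (hPt ▸ hP0)
  have hK0 : K ≠ 0 := right_ne_zero_of_mul (hK ▸ hG0)
  have hHQg : H ∣ Qt ^ g := gcd_dvd_right G (Qt ^ g)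
  -- Part 1
  have part1 : ∀ p : Polynomial k, Irreducible p → p ∣ H → p ∣ Qt := by
    intro p hp hdvd
    exact hp.prime.dvd_of_dvd_pow (hdvd.trans hHQg)
  -- coprimality of Pt and Qt
  have copPtQt : IsCoprime Pt Qt := by
    rw [← gcd_isUnit_iff]
    apply isUnit_of_dvd_one
    have h1 : G * gcd Pt Qt ∣ G :=
      dvd_gcd (hPt ▸ mul_dvd_mul_left G (gcd_dvd_left Pt Qt))
        (hQt ▸ mul_dvd_mul_left G (gcd_dvd_right Pt Qt))
    have h2 : G * gcd Pt Qt ∣ G * 1 := by rwa [mul_one]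
    exact (mul_dvd_mul_iff_left hG0).mp h2
  -- no common prime factor of K and Qt
  have noCommon : ∀ p : Polynomial k, Prime p → p ∣ K → ¬ p ∣ Qt := by
    intro p hpp hpK hpQt
    have hfin : FiniteMultiplicity p H := FiniteMultiplicity.of_prime_left hpp hH0
    set m := multiplicity p H with hmdef
    have h1 : p ^ (m + 1) ∣ G := by
      rw [hK, pow_succ]
      exact mul_dvd_mul (pow_multiplicity_dvd p H) hpK
    have hdeg : m + 1 ≤ g := by
      have hle := Polynomial.natDegree_le_of_dvd h1 hG0
      rw [Polynomial.natDegree_pow] at hle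
      have hd1 : 0 < p.natDegree := hpp.irreducible.natDegree_pos
      calc m + 1 ≤ (m + 1) * p.natDegree := Nat.le_mul_of_pos_right _ hd1
        _ ≤ g := hle
    have h2 : p ^ (m + 1) ∣ Qt ^ g :=
      (pow_dvd_pow p hdeg).trans (pow_dvd_pow_of_dvd hpQt g)
    exact hfin.not_pow_dvd_of_multiplicity_lt (lt_add_one m) (dvd_gcd h1 h2)
  -- Part 2
  have part2 : IsCoprime K Qt := by
    rw [← gcd_isUnit_iff]
    by_contra hu
    have hne : gcd K Qt ≠ 0 := fun h => hK0 ((gcd_eq_zero_iff K Qt).mp h).1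
    obtain ⟨p, hpi, hpd⟩ := WfDvdMonoid.exists_irreducible_factor hu hne
    exact noCommon p hpi.prime (hpd.trans (gcd_dvd_left K Qt))
      (hpd.trans (gcd_dvd_right K Qt)) 
  -- coprimality of H and K
  have copHK : IsCoprime H K := by
    rw [← gcd_isUnit_iff]
    by_contra hu
    have hne : gcd H K ≠ 0 := fun h => hH0 ((gcd_eq_zero_iff H K).mp h).1
    obtain ⟨p, hpi, hpd⟩ := WfDvdMonoid.exists_irreducible_factor hu hne
    exact noCommon p hpi.prime (hpd.trans (gcd_dvd_right H K))
      (part1 p hpi (hpd.trans (gcd_dvd_left H K)))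
  -- coprimality of H and Pt
  have copHPt : IsCoprime H Pt := by
    rw [← gcd_isUnit_iff]
    by_contra hu
    have hne : gcd H Pt ≠ 0 := fun h => hH0 ((gcd_eq_zero_iff H Pt).mp h).1
    obtain ⟨p, hpi, hpd⟩ := WfDvdMonoid.exists_irreducible_factor hu hne
    have hpQt : p ∣ Qt := part1 p hpi (hpd.trans (gcd_dvd_left H Pt))
    exact hpi.not_isUnit (copPtQt.isUnit_of_dvd' (hpd.trans (gcd_dvd_right H Pt)) hpQt)
  -- Part 3
  have part3 : IsCoprime (H * Qt) (K * Pt) :=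
    (copHK.mul_right copHPt).mul_left (part2.symm.mul_right copPtQt.symm)
  refine ⟨part1, part2, part3, ?_⟩
  -- Part 4
  have hmul : G * lcm P Q = G * (H * Qt * (K * Pt)) := by
    have hGm : G.Monic := hGdef ▸ normalize_gcd P Q ▸ Polynomial.monic_normalize hG0
    have hlcm0 : lcm P Q ≠ 0 := fun h => ((lcm_eq_zero_iff P Q).mp h).elim hP0 hQ0
    have hlcmm : (lcm P Q).Monic := normalize_lcm P Q ▸ Polynomial.monic_normalize hlcm0
    have h : G * lcm P Q = P * Q :=
      Polynomial.eq_of_monic_of_associated (hGm.mul hlcmm) (hP.mul hQ) (gcd_mul_lcm P Q)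
    calc G * lcm P Q = P * Q := h
      _ = (G * Qt) * (G * Pt) := by rw [← hQt, ← hPt]; ring
      _ = G * (H * Qt * (K * Pt)) := by rw [hK]; ring
  exact mul_left_cancel₀ hG0 hmul
end

section
/- Two rational normal forms that are similar over a field k are equal: if R(P₁,…,P_r) and R(Q₁,…,Q_s) are block-diagonal matrices of companion blocks with P_{i+1} ∣ P_i and Q_{j+1} ∣ Q_j for all i, j, and the two matrices are similar, then r = s and P_i = Q_i for all i. -/
open Matrix Polynomial Module Finset

/-- The companion matrix of a polynomial `P`: `1`'s on the subdiagonal and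
last column given by the negatives of the coefficients of `P`. -/
def companionMatrix {k : Type*} [Field k] (P : Polynomial k) :
    Matrix (Fin P.natDegree) (Fin P.natDegree) k :=
  fun i j =>
    if (j : ℕ) + 1 = P.natDegree then -P.coeff (i : ℕ)
    else if (i : ℕ) = (j : ℕ) + 1 then 1 else 0

/-- The rational normal form `R(P₁,…,P_r)`: the block-diagonal matrix with
companion matrices `B(P₁),…,B(P_r)` on the diagonal. -/
def RNF {k : Type*} [Field k] {r : ℕ} (P : Fin r → Polynomial k) :
    Matrix ((i : Fin r) × Fin (P i).natDegree) ((i : Fin r) × Fin (P i).natDegree) k :=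
  Matrix.blockDiagonal' fun i => companionMatrix (P i)


section AuxLemmas
variable {k : Type*} [Field k]

/-- rank of a block diagonal matrix is the sum of ranks of blocks -/
theorem rank_blockDiagonal'' {o : Type*} [Fintype o] [DecidableEq o]
    {n : o → Type*} [∀ i, Fintype (n i)] [∀ i, DecidableEq (n i)]
    (M : ∀ i, Matrix (n i) (n i) k) :
    (blockDiagonal' M).rank = ∑ i, (M i).rank := by
  classical
  let E : ((Σ i, n i) → k) ≃ₗ[k] ∀ i, (n i → k) :=
    LinearEquiv.piCurry k (fun _ _ => k)
  let F : (∀ i, n i → k) →ₗ[k] (∀ i, n i → k) :=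
    LinearMap.pi (fun i => (M i).mulVecLin ∘ₗ LinearMap.proj i)
  have hkey : (blockDiagonal' M).mulVecLin
      = E.symm.toLinearMap ∘ₗ F ∘ₗ E.toLinearMap := by
    apply LinearMap.ext; intro v
    funext ⟨i, x⟩
    simp only [LinearMap.coe_comp, Function.comp_apply, LinearEquiv.coe_coe,
      LinearEquiv.piCurry_apply, LinearEquiv.piCurry_symm_apply, E,
      Sigma.uncurry, F, LinearMap.pi_apply, LinearMap.proj_apply,
      mulVecLin_apply, mulVec, dotProduct]
    rw [← Finset.univ_sigma_univ, Finset.sum_sigma]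
    rw [Finset.sum_eq_single i]
    · simp [blockDiagonal'_apply, Sigma.curry]
    · intro j _ hji
      apply Finset.sum_eq_zero
      intro y _
      simp [blockDiagonal'_apply, (Ne.symm hji)]
    · simp
  have h1 : (blockDiagonal' M).rank = finrank k (LinearMap.range F) := by
    rw [Matrix.rank, hkey, LinearMap.range_comp, LinearMap.range_comp_of_range_eq_top _ E.range,
      LinearEquiv.finrank_map_eq]
  rw [h1]
  -- now finrank range F = sum
  let G : (∀ i, LinearMap.range (M i).mulVecLin) →ₗ[k] (∀ i, n i → k) :=
    LinearMap.pi (fun i => (LinearMap.range (M i).mulVecLin).subtype ∘ₗ LinearMap.proj i)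
  have hGinj : Function.Injective G := by
    intro a b hab
    funext i
    exact Subtype.ext (congrFun hab i)
  have hGrange : LinearMap.range G = LinearMap.range F := by
    ext w
    constructor
    · rintro ⟨a, rfl⟩
      have : ∀ i, ∃ v, (M i).mulVecLin v = (a i : n i → k) := fun i => (a i).2
      choose v hv using this
      exact ⟨v, by funext i; simp [F, G, hv i]⟩
    · rintro ⟨v, rfl⟩
      refine ⟨fun i => ⟨(M i).mulVecLin (v i), ⟨v i, rfl⟩⟩, rfl⟩
  rw [← hGrange, LinearMap.finrank_range_of_inj hGinj, finrank_pi_fintype]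
  rfl

/-- blockDiagonal' as an AlgHom from the Pi algebra. -/
def bdAlgHom {o : Type*} [Fintype o] [DecidableEq o]
    {n : o → Type*} [∀ i, Fintype (n i)] [∀ i, DecidableEq (n i)] :
    (∀ i, Matrix (n i) (n i) k) →ₐ[k] Matrix (Σ i, n i) (Σ i, n i) k :=
  { Matrix.blockDiagonal'RingHom n k with
    commutes' := fun c => by
      show blockDiagonal' (fun i => algebraMap k _ c) = algebraMap k _ c
      have : (fun i => algebraMap k (Matrix (n i) (n i) k) c)
          = c • (1 : ∀ i, Matrix (n i) (n i) k) := by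
        funext i; rw [Algebra.algebraMap_eq_smul_one]; rfl
      rw [this, blockDiagonal'_smul, blockDiagonal'_one, ← Algebra.algebraMap_eq_smul_one] }

theorem aeval_blockDiagonal' {o : Type*} [Fintype o] [DecidableEq o]
    {n : o → Type*} [∀ i, Fintype (n i)] [∀ i, DecidableEq (n i)]
    (M : ∀ i, Matrix (n i) (n i) k) (f : Polynomial k) :
    aeval (blockDiagonal' M) f = blockDiagonal' (fun i => aeval (M i) f) := by
  have h1 : aeval (bdAlgHom (k := k) M) f = bdAlgHom (aeval M f) :=
    aeval_algHom_apply bdAlgHom M f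
  have h2 : aeval M f = fun i => aeval (M i) f := by
    funext i
    simpa using (aeval_algHom_apply (Pi.evalAlgHom k (fun i => Matrix (n i) (n i) k) i) M f).symm
  show aeval (bdAlgHom (k := k) M) f = _
  rw [h1, h2]; rfl

/-- conjugation by a unit as an AlgEquiv -/
def conjAlgEquiv {A : Type*} [Semiring A] [Algebra k A] (U : Aˣ) : A ≃ₐ[k] A where
  toFun x := ↑U⁻¹ * x * ↑U
  invFun x := ↑U * x * ↑U⁻¹
  left_inv x := by
    simp [mul_assoc, Units.mul_inv, Units.inv_mul, Units.mul_inv_cancel_left,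
      Units.inv_mul_cancel_left]
  right_inv x := by
    simp [mul_assoc, Units.mul_inv, Units.inv_mul, Units.mul_inv_cancel_left,
      Units.inv_mul_cancel_left]
  map_mul' x y := by
    simp [mul_assoc, Units.mul_inv, Units.inv_mul, Units.mul_inv_cancel_left,
      Units.inv_mul_cancel_left]
  map_add' x y := by simp [mul_add, add_mul]
  commutes' c := by
    simp [Algebra.algebraMap_eq_smul_one, mul_smul_comm, smul_mul_assoc, Units.inv_mul]

theorem aeval_conj {n : Type*} [Fintype n] [DecidableEq n]
    (U : (Matrix n n k)ˣ) (A : Matrix n n k) (f : Polynomial k) :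
    aeval ((↑U⁻¹ : Matrix n n k) * A * (↑U : Matrix n n k)) f
      = (↑U⁻¹ : Matrix n n k) * aeval A f * (↑U : Matrix n n k) := by
  have := aeval_algHom_apply (conjAlgEquiv (k := k) U).toAlgHom A f
  simpa [conjAlgEquiv] using this


theorem companion_eq_leftMulMatrix (P : Polynomial k) (hP : P.Monic) :
    companionMatrix P
      = Algebra.leftMulMatrix (AdjoinRoot.powerBasis' hP).basis (AdjoinRoot.root P) := by
  ext i j
  erw [Algebra.leftMulMatrix_eq_repr_mul]
  have hb : ∀ m : Fin P.natDegree,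
      (AdjoinRoot.powerBasis' hP).basis m = AdjoinRoot.root P ^ (m : ℕ) :=
    (AdjoinRoot.powerBasis' hP).basis_eq_pow
  rw [hb, ← pow_succ']
  have hrepr : ∀ (g : Polynomial k) (i : Fin P.natDegree),
      (AdjoinRoot.powerBasis' hP).basis.repr (AdjoinRoot.mk P g) i = (g %ₘ P).coeff i := by
    intro g i
    show (AdjoinRoot.powerBasisAux' hP).repr (AdjoinRoot.mk P g) i = _
    rw [AdjoinRoot.powerBasisAux'_repr_apply_to_fun, AdjoinRoot.modByMonicHom_mk]
  have hroot : AdjoinRoot.root P ^ ((j : ℕ) + 1) = AdjoinRoot.mk P (X ^ ((j : ℕ) + 1)) := by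
    rw [map_pow, AdjoinRoot.mk_X]
  rw [hroot, hrepr]
  have hP0 : P ≠ 0 := hP.ne_zero
  have hdegP : P.degree = (P.natDegree : WithBot ℕ) := Polynomial.degree_eq_natDegree hP0
  by_cases hj : (j : ℕ) + 1 = P.natDegree
  · -- X^d %ₘ P = X^d - P
    have hdlt : (X ^ P.natDegree - P).degree < P.degree := by
      have := Polynomial.degree_sub_lt (p := (X : Polynomial k) ^ P.natDegree) (q := P)
        (by rw [Polynomial.degree_X_pow, hdegP]) (pow_ne_zero _ Polynomial.X_ne_zero)
        (by rw [Polynomial.leadingCoeff_X_pow, hP.leadingCoeff])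
      rwa [Polynomial.degree_X_pow, ← hdegP] at this
    have hXd : (X : Polynomial k) ^ P.natDegree %ₘ P = X ^ P.natDegree - P := by
      refine (Polynomial.div_modByMonic_unique 1 (X ^ P.natDegree - P) hP ⟨by ring, hdlt⟩).2
    rw [hj, hXd, companionMatrix]
    simp only [hj, if_true]
    rw [Polynomial.coeff_sub, Polynomial.coeff_X_pow]
    have : (i : ℕ) ≠ P.natDegree := Nat.ne_of_lt i.2
    simp [this]
  · have hlt : ((j : ℕ) + 1) < P.natDegree := lt_of_le_of_ne (Nat.succ_le_of_lt j.2) hj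
    have : (X : Polynomial k) ^ ((j : ℕ) + 1) %ₘ P = X ^ ((j : ℕ) + 1) := by
      apply (Polynomial.modByMonic_eq_self_iff hP).2
      calc ((X : Polynomial k) ^ ((j : ℕ) + 1)).degree = ((j : ℕ) + 1 : ℕ) := Polynomial.degree_X_pow _
        _ < (P.natDegree : ℕ) := by exact_mod_cast Nat.cast_lt.mpr hlt
        _ ≤ P.degree := by rw [hdegP]
    rw [this, Polynomial.coeff_X_pow, companionMatrix]
    simp only [hj, if_false]

theorem finrank_range_mulLeft_mk (P f d P' : Polynomial k) (hP0 : P ≠ 0)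
    (hPP' : P = d * P') (hdvdf : d ∣ f) (hbez : ∃ a b, d = P * a + f * b) :
    finrank k (LinearMap.range (LinearMap.mulLeft k (AdjoinRoot.mk P f)))
      = P'.natDegree := by
  have hd0 : d ≠ 0 := fun h => hP0 (by rw [hPP', h, zero_mul])
  have hP'0 : P' ≠ 0 := fun h => hP0 (by rw [hPP', h, mul_zero])
  let α : Polynomial k →ₗ[k] AdjoinRoot P := (Polynomial.aeval (AdjoinRoot.root P)).toLinearMap
  have hα : ∀ g, α g = AdjoinRoot.mk P g := fun g => AdjoinRoot.aeval_eq g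
  let ψ : Polynomial k →ₗ[k] AdjoinRoot P := α ∘ₗ LinearMap.mulLeft k d
  have hψ : ∀ g, ψ g = AdjoinRoot.mk P (d * g) := fun g => hα _
  have hrange : LinearMap.range ψ = LinearMap.range (LinearMap.mulLeft k (AdjoinRoot.mk P f)) := by
    ext z
    simp only [LinearMap.mem_range]
    constructor
    · rintro ⟨g, rfl⟩
      obtain ⟨a, b, hab⟩ := hbez
      refine ⟨AdjoinRoot.mk P (b * g), ?_⟩
      rw [LinearMap.mulLeft_apply, ← _root_.map_mul, hψ]
      refine AdjoinRoot.mk_eq_mk.2 ⟨-(a * g), ?_⟩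
      rw [hab]; ring
    · rintro ⟨y, rfl⟩
      obtain ⟨g, rfl⟩ := AdjoinRoot.mk_surjective y
      obtain ⟨f₁, hf₁⟩ := hdvdf
      refine ⟨f₁ * g, ?_⟩
      rw [hψ, LinearMap.mulLeft_apply, ← _root_.map_mul, ← mul_assoc, ← hf₁]
  have hker : LinearMap.ker ψ = (Ideal.span {P'} : Ideal (Polynomial k)).restrictScalars k := by
    ext g
    simp only [LinearMap.mem_ker, Submodule.restrictScalars_mem, Ideal.mem_span_singleton]
    rw [hψ, AdjoinRoot.mk_eq_zero, hPP', mul_dvd_mul_iff_left hd0]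
  have e1 : (Polynomial k ⧸ LinearMap.ker ψ) ≃ₗ[k] LinearMap.range ψ := ψ.quotKerEquivRange
  have e2 : (Polynomial k ⧸ LinearMap.ker ψ) ≃ₗ[k]
      (Polynomial k ⧸ (Ideal.span {P'} : Ideal (Polynomial k))) := by
    rw [hker]
    exact Submodule.Quotient.restrictScalarsEquiv k _
  have h3 : finrank k (Polynomial k ⧸ (Ideal.span {P'} : Ideal (Polynomial k)))
      = P'.natDegree := by
    have : finrank k (AdjoinRoot P') = (AdjoinRoot.powerBasis hP'0).dim :=
      (AdjoinRoot.powerBasis hP'0).finrank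
    simp at this; exact this
  rw [← hrange, ← LinearEquiv.finrank_eq e1, LinearEquiv.finrank_eq e2, h3]




theorem rank_aeval_companion (P f d P' : Polynomial k) (hP : P.Monic)
    (hPP' : P = d * P') (hdvdf : d ∣ f) (hbez : ∃ a b, d = P * a + f * b) :
    (aeval (companionMatrix P) f).rank = P'.natDegree := by
  have hP0 : P ≠ 0 := hP.ne_zero
  have h1 := aeval_algHom_apply (Algebra.leftMulMatrix (AdjoinRoot.powerBasis' hP).basis)
    (AdjoinRoot.root P) f
  rw [AdjoinRoot.aeval_eq] at h1
  have h2 : aeval (companionMatrix P) f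
      = Algebra.leftMulMatrix (AdjoinRoot.powerBasis' hP).basis (AdjoinRoot.mk P f) := by
    rw [companion_eq_leftMulMatrix P hP]; exact h1
  erw [h2, Matrix.rank_eq_finrank_range_toLin _ (AdjoinRoot.powerBasis' hP).basis
    (AdjoinRoot.powerBasis' hP).basis, ← Algebra.toMatrix_lmul_eq, Matrix.toLin_toMatrix]
  exact finrank_range_mulLeft_mk P f d P' hP0 hPP' hdvdf hbez

/-- if gcd of b with a has the degree of b, then b divides a -/
theorem dvd_of_gcd_natDegree [DecidableEq (Polynomial k)] (a b : Polynomial k) (hb : b ≠ 0)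
    (h : (EuclideanDomain.gcd b a).natDegree = b.natDegree) : b ∣ a := by
  have h1 : EuclideanDomain.gcd b a ∣ b := EuclideanDomain.gcd_dvd_left b a
  obtain ⟨c, hc⟩ := h1
  have hg0 : EuclideanDomain.gcd b a ≠ 0 := fun h0 => hb (by rw [hc, h0, zero_mul])
  have hc0 : c ≠ 0 := fun h0 => hb (by rw [hc, h0, mul_zero])
  have hdeg : b.natDegree = (EuclideanDomain.gcd b a).natDegree + c.natDegree := by
    have := Polynomial.natDegree_mul hg0 hc0
    rw [← hc] at this
    exact this
  have hcdeg : c.natDegree = 0 := by omega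
  have hcu : IsUnit c := by
    rw [Polynomial.eq_C_of_natDegree_eq_zero hcdeg]
    exact (Polynomial.isUnit_C).2 (isUnit_iff_ne_zero.2 (fun h0 => hc0 (by
      rw [Polynomial.eq_C_of_natDegree_eq_zero hcdeg, h0, map_zero])))
  have hassoc : Associated (EuclideanDomain.gcd b a) b := ⟨hcu.unit, by rw [IsUnit.unit_spec]; exact hc.symm⟩
  exact dvd_trans hassoc.symm.dvd (EuclideanDomain.gcd_dvd_right b a)

theorem chains_eq [DecidableEq (Polynomial k)] {r s : ℕ} (p q : ℕ → Polynomial k)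
    (hpm : ∀ i, i < r → (p i).Monic) (hpd : ∀ i, i < r → 0 < (p i).natDegree)
    (hqm : ∀ j, j < s → (q j).Monic) (hqd : ∀ j, j < s → 0 < (q j).natDegree)
    (hpchain : ∀ i, i + 1 < r → p (i + 1) ∣ p i)
    (hqchain : ∀ j, j + 1 < s → q (j + 1) ∣ q j)
    (hN : ∑ i ∈ range r, (p i).natDegree = ∑ j ∈ range s, (q j).natDegree)
    (H : ∀ f, ∑ i ∈ range r, (EuclideanDomain.gcd (p i) f).natDegree
        = ∑ j ∈ range s, (EuclideanDomain.gcd (q j) f).natDegree) :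
    r = s ∧ ∀ t, t < r → t < s → p t = q t := by
  have hp0 : ∀ i, i < r → p i ≠ 0 := fun i hi => (hpm i hi).ne_zero
  have hq0 : ∀ j, j < s → q j ≠ 0 := fun j hj => (hqm j hj).ne_zero
  have hpmono : ∀ a b, a ≤ b → b < r → p b ∣ p a := by
    intro a b hab
    induction b, hab using Nat.le_induction with
    | base => exact fun _ => dvd_rfl
    | succ b hb ih => exact fun hbr => (hpchain b hbr).trans (ih (Nat.lt_of_succ_lt hbr))
  have hqmono : ∀ a b, a ≤ b → b < s → q b ∣ q a := by
    intro a b hab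
    induction b, hab using Nat.le_induction with
    | base => exact fun _ => dvd_rfl
    | succ b hb ih => exact fun hbs => (hqchain b hbs).trans (ih (Nat.lt_of_succ_lt hbs))
  -- gcd degree facts
  have hgcd_le_p : ∀ f, ∀ i, i < r →
      (EuclideanDomain.gcd (p i) f).natDegree ≤ (p i).natDegree := fun f i hi =>
    Polynomial.natDegree_le_of_dvd (EuclideanDomain.gcd_dvd_left _ _) (hp0 i hi)
  have hgcd_le_q : ∀ f, ∀ j, j < s →
      (EuclideanDomain.gcd (q j) f).natDegree ≤ (q j).natDegree := fun f j hj =>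
    Polynomial.natDegree_le_of_dvd (EuclideanDomain.gcd_dvd_left _ _) (hq0 j hj)
  have hgcd_eq_of_dvd : ∀ (f b : Polynomial k), b ≠ 0 → b ∣ f →
      (EuclideanDomain.gcd b f).natDegree = b.natDegree := by
    intro f b hb hbf
    refine le_antisymm (Polynomial.natDegree_le_of_dvd (EuclideanDomain.gcd_dvd_left _ _) hb) ?_
    refine Polynomial.natDegree_le_of_dvd (EuclideanDomain.dvd_gcd dvd_rfl hbf) ?_
    exact fun h0 => hb (EuclideanDomain.gcd_eq_zero_iff.mp h0).1
  -- main induction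
  have key : ∀ t, t < r → t < s → p t = q t := by
    intro t
    induction t using Nat.strong_induction_on with
    | _ t IH =>
    intro htr hts
    have hsplit : ∀ f, (∑ i ∈ Ico t r, (EuclideanDomain.gcd (p i) f).natDegree)
        = ∑ j ∈ Ico t s, (EuclideanDomain.gcd (q j) f).natDegree := by
      intro f
      have h := H f
      rw [← Finset.sum_range_add_sum_Ico _ (le_of_lt htr),
        ← Finset.sum_range_add_sum_Ico _ (le_of_lt hts)] at h
      have hlow : ∑ i ∈ range t, (EuclideanDomain.gcd (p i) f).natDegree
          = ∑ i ∈ range t, (EuclideanDomain.gcd (q i) f).natDegree := by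
        refine Finset.sum_congr rfl (fun i hi => ?_)
        rw [IH i (mem_range.mp hi) ((mem_range.mp hi).trans htr) ((mem_range.mp hi).trans hts)]
      omega
    -- with f = p t
    have hA : (∑ i ∈ Ico t r, (p i).natDegree)
        = ∑ j ∈ Ico t s, (EuclideanDomain.gcd (q j) (p t)).natDegree := by
      rw [← hsplit (p t)]
      refine (Finset.sum_congr rfl (fun i hi => ?_)).symm
      obtain ⟨h1, h2⟩ := Finset.mem_Ico.mp hi
      exact hgcd_eq_of_dvd _ _ (hp0 i h2) (hpmono t i h1 h2)
    have hB : (∑ j ∈ Ico t s, (q j).natDegree)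
        = ∑ i ∈ Ico t r, (EuclideanDomain.gcd (p i) (q t)).natDegree := by
      rw [hsplit (q t)]
      refine (Finset.sum_congr rfl (fun j hj => ?_)).symm
      obtain ⟨h1, h2⟩ := Finset.mem_Ico.mp hj
      exact hgcd_eq_of_dvd _ _ (hq0 j h2) (hqmono t j h1 h2)
    have hle1 : (∑ j ∈ Ico t s, (EuclideanDomain.gcd (q j) (p t)).natDegree)
        ≤ ∑ j ∈ Ico t s, (q j).natDegree :=
      Finset.sum_le_sum (fun j hj => hgcd_le_q _ j (Finset.mem_Ico.mp hj).2)
    have hle2 : (∑ i ∈ Ico t r, (EuclideanDomain.gcd (p i) (q t)).natDegree)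
        ≤ ∑ i ∈ Ico t r, (p i).natDegree :=
      Finset.sum_le_sum (fun i hi => hgcd_le_p _ i (Finset.mem_Ico.mp hi).2)
    have heq : (∑ j ∈ Ico t s, (EuclideanDomain.gcd (q j) (p t)).natDegree)
        = ∑ j ∈ Ico t s, (q j).natDegree := by omega
    have heq2 : (∑ i ∈ Ico t r, (EuclideanDomain.gcd (p i) (q t)).natDegree)
        = ∑ i ∈ Ico t r, (p i).natDegree := by omega
    have hterm1 := (Finset.sum_eq_sum_iff_of_le
      (fun j hj => hgcd_le_q (p t) j (Finset.mem_Ico.mp hj).2)).mp heq t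
      (Finset.mem_Ico.mpr ⟨le_refl t, hts⟩)
    have hterm2 := (Finset.sum_eq_sum_iff_of_le
      (fun i hi => hgcd_le_p (q t) i (Finset.mem_Ico.mp hi).2)).mp heq2 t
      (Finset.mem_Ico.mpr ⟨le_refl t, htr⟩)
    have hd1 : q t ∣ p t := dvd_of_gcd_natDegree _ _ (hq0 t hts) hterm1
    have hd2 : p t ∣ q t := dvd_of_gcd_natDegree _ _ (hp0 t htr) hterm2
    exact Polynomial.eq_of_monic_of_associated (hpm t htr) (hqm t hts)
      (associated_of_dvd_dvd hd2 hd1)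
  refine ⟨?_, key⟩
  by_contra hrs
  rcases Nat.lt_or_ge r s with hlt | hge
  · have : ∑ i ∈ range r, (p i).natDegree = ∑ j ∈ range r, (q j).natDegree :=
      Finset.sum_congr rfl (fun i hi => by
        rw [key i (mem_range.mp hi) ((mem_range.mp hi).trans hlt)])
    rw [← Finset.sum_range_add_sum_Ico _ (le_of_lt hlt)] at hN
    have h0 : ∑ j ∈ Ico r s, (q j).natDegree = 0 := by omega
    have hmem : r ∈ Ico r s := Finset.mem_Ico.mpr ⟨le_refl r, hlt⟩
    have := Finset.sum_eq_zero_iff.mp h0 r hmem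
    have := hqd r hlt
    omega
  · rcases Nat.lt_or_ge s r with hlt | hge2
    · have : ∑ j ∈ range s, (q j).natDegree = ∑ i ∈ range s, (p i).natDegree :=
        Finset.sum_congr rfl (fun j hj => by
          rw [key j ((mem_range.mp hj).trans hlt) (mem_range.mp hj)])
      rw [← Finset.sum_range_add_sum_Ico _ (le_of_lt hlt)] at hN
      have h0 : ∑ i ∈ Ico s r, (p i).natDegree = 0 := by omega
      have hmem : s ∈ Ico s r := Finset.mem_Ico.mpr ⟨le_refl s, hlt⟩
      have := Finset.sum_eq_zero_iff.mp h0 s hmem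
      have := hpd s hlt
      omega
    · omega

end AuxLemmas

/-- Two similar rational normal forms are equal. -/
theorem rnf_unique {k : Type*} [Field k] {r s : ℕ}
    (P : Fin r → Polynomial k) (Q : Fin s → Polynomial k)
    (hPm : ∀ i, (P i).Monic) (hPd : ∀ i, 0 < (P i).natDegree)
    (hQm : ∀ j, (Q j).Monic) (hQd : ∀ j, 0 < (Q j).natDegree)
    (hPchain : ∀ i : Fin r, ∀ h : (i : ℕ) + 1 < r, P ⟨(i : ℕ) + 1, h⟩ ∣ P i)
    (hQchain : ∀ j : Fin s, ∀ h : (j : ℕ) + 1 < s, Q ⟨(j : ℕ) + 1, h⟩ ∣ Q j)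
    (hsim : ∃ e : ((i : Fin r) × Fin (P i).natDegree) ≃ ((j : Fin s) × Fin (Q j).natDegree),
      ∃ T : Matrix ((j : Fin s) × Fin (Q j).natDegree) ((j : Fin s) × Fin (Q j).natDegree) k,
        IsUnit T ∧ T⁻¹ * (Matrix.reindex e e (RNF P)) * T = RNF Q) :
    r = s ∧ ∀ (i : Fin r) (j : Fin s), (i : ℕ) = (j : ℕ) → P i = Q j := by
  classical
  obtain ⟨e, T, hT, hST⟩ := hsim
  -- total degree equality
  have hcard : ∑ i, (P i).natDegree = ∑ j, (Q j).natDegree := by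
    have := Fintype.card_congr e
    simpa [Fintype.card_sigma] using this
  -- rank invariance under similarity
  have hrank : ∀ f : Polynomial k, (aeval (RNF P) f).rank = (aeval (RNF Q) f).rank := by
    intro f
    set U := hT.unit with hU
    have hUval : (U : Matrix _ _ k) = T := hT.unit_spec
    have hUinv : ((U⁻¹ : _ˣ) : Matrix _ _ k) = T⁻¹ := by
      rw [Matrix.coe_units_inv, hUval]
    have hre : aeval (Matrix.reindex e e (RNF P)) f
        = Matrix.reindex e e (aeval (RNF P) f) := by
      have := aeval_algHom_apply (Matrix.reindexAlgEquiv k k e).toAlgHom (RNF P) f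
      simpa using this
    have h1 : RNF Q = (↑U⁻¹ : Matrix _ _ k) * Matrix.reindex e e (RNF P) * (↑U : Matrix _ _ k) := by
      rw [hUinv, hUval, hST]
    rw [h1, _root_.aeval_conj, Matrix.rank_mul_eq_left_of_isUnit_det _ _
      (Matrix.isUnit_iff_isUnit_det _ |>.mp U.isUnit),
      Matrix.rank_mul_eq_right_of_isUnit_det _ _
      (Matrix.isUnit_iff_isUnit_det _ |>.mp (U⁻¹).isUnit), hre, Matrix.rank_reindex]
  -- rank of aeval on an RNF as a sum over companion blocks
  have hsum : ∀ (m : ℕ) (R : Fin m → Polynomial k) (f : Polynomial k),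
      (aeval (RNF R) f).rank = ∑ i, (aeval (companionMatrix (R i)) f).rank := by
    intro m R f
    rw [show RNF R = blockDiagonal' (fun i => companionMatrix (R i)) from rfl,
      aeval_blockDiagonal', rank_blockDiagonal'']
  -- per-block rank + gcd degree
  have hblock : ∀ (R f : Polynomial k), R.Monic →
      (aeval (companionMatrix R) f).rank + (EuclideanDomain.gcd R f).natDegree
        = R.natDegree := by
    intro R f hR
    have hR0 : R ≠ 0 := hR.ne_zero
    set d := EuclideanDomain.gcd R f with hd
    have hd0 : d ≠ 0 := fun h => hR0 (EuclideanDomain.gcd_eq_zero_iff.mp (hd ▸ h)).1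
    have hdvdP : d ∣ R := EuclideanDomain.gcd_dvd_left R f
    have hRR' : R = d * (R / d) := (EuclideanDomain.mul_div_cancel' hd0 hdvdP).symm
    have hR'0 : R / d ≠ 0 := fun h => hR0 (by rw [hRR', h, mul_zero])
    rw [rank_aeval_companion R f d (R / d) hR hRR' (EuclideanDomain.gcd_dvd_right R f)
      ⟨EuclideanDomain.gcdA R f, EuclideanDomain.gcdB R f, EuclideanDomain.gcd_eq_gcd_ab R f⟩]
    have := Polynomial.natDegree_mul hd0 hR'0
    rw [← hRR'] at this
    omega
  -- the gcd-degree invariant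
  have Hgcd : ∀ f : Polynomial k,
      ∑ i, (EuclideanDomain.gcd (P i) f).natDegree
        = ∑ j, (EuclideanDomain.gcd (Q j) f).natDegree := by
    intro f
    have h1 : ∑ i, ((aeval (companionMatrix (P i)) f).rank
        + (EuclideanDomain.gcd (P i) f).natDegree) = ∑ i, (P i).natDegree :=
      Finset.sum_congr rfl (fun i _ => hblock (P i) f (hPm i))
    have h2 : ∑ j, ((aeval (companionMatrix (Q j)) f).rank
        + (EuclideanDomain.gcd (Q j) f).natDegree) = ∑ j, (Q j).natDegree :=
      Finset.sum_congr rfl (fun j _ => hblock (Q j) f (hQm j))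
    rw [Finset.sum_add_distrib] at h1 h2
    have h3 : ∑ i, (aeval (companionMatrix (P i)) f).rank
        = ∑ j, (aeval (companionMatrix (Q j)) f).rank := by
      rw [← hsum r P f, ← hsum s Q f]
      exact hrank f
    omega
  -- transfer to ℕ-indexed chains
  set pN : ℕ → Polynomial k := fun i => if h : i < r then P ⟨i, h⟩ else 1 with hpN
  set qN : ℕ → Polynomial k := fun j => if h : j < s then Q ⟨j, h⟩ else 1 with hqN
  have hpNe : ∀ (i : Fin r), pN (i : ℕ) = P i := fun i => by
    simp only [hpN, i.2, dif_pos]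
  have hqNe : ∀ (j : Fin s), qN (j : ℕ) = Q j := fun j => by
    simp only [hqN, j.2, dif_pos]
  have hconvP : ∀ (g : Polynomial k → ℕ),
      ∑ i, g (P i) = ∑ i ∈ Finset.range r, g (pN i) := by
    intro g
    rw [← Fin.sum_univ_eq_sum_range (fun m => g (pN m)) r]
    exact Finset.sum_congr rfl (fun i _ => by rw [hpNe i])
  have hconvQ : ∀ (g : Polynomial k → ℕ),
      ∑ j, g (Q j) = ∑ j ∈ Finset.range s, g (qN j) := by
    intro g
    rw [← Fin.sum_univ_eq_sum_range (fun m => g (qN m)) s]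
    exact Finset.sum_congr rfl (fun j _ => by rw [hqNe j])
  have main := chains_eq (r := r) (s := s) pN qN
    (fun i hi => by rw [show pN i = P ⟨i, hi⟩ from dif_pos hi]; exact hPm _)
    (fun i hi => by rw [show pN i = P ⟨i, hi⟩ from dif_pos hi]; exact hPd _)
    (fun j hj => by rw [show qN j = Q ⟨j, hj⟩ from dif_pos hj]; exact hQm _)
    (fun j hj => by rw [show qN j = Q ⟨j, hj⟩ from dif_pos hj]; exact hQd _)
    (fun i hi => by
      rw [show pN (i + 1) = P ⟨i + 1, hi⟩ from dif_pos hi,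
        show pN i = P ⟨i, Nat.lt_of_succ_lt hi⟩ from dif_pos _]
      exact hPchain ⟨i, Nat.lt_of_succ_lt hi⟩ hi)
    (fun j hj => by
      rw [show qN (j + 1) = Q ⟨j + 1, hj⟩ from dif_pos hj,
        show qN j = Q ⟨j, Nat.lt_of_succ_lt hj⟩ from dif_pos _]
      exact hQchain ⟨j, Nat.lt_of_succ_lt hj⟩ hj)
    (by rw [← hconvP (fun p => p.natDegree), ← hconvQ (fun p => p.natDegree)]; exact hcard)
    (fun f => by
      rw [← hconvP (fun p => (EuclideanDomain.gcd p f).natDegree),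
        ← hconvQ (fun p => (EuclideanDomain.gcd p f).natDegree)]
      exact Hgcd f)
  obtain ⟨hrs, hall⟩ := main
  refine ⟨hrs, fun i j hij => ?_⟩
  have := hall (i : ℕ) i.2 (hij ▸ j.2)
  rw [hpNe i] at this
  rw [this, hij, hqNe j]
end
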